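/- arXiv:1608.07054 — 3 statements merged into one kernel-verified Lean document; each statement's English description precedes it below -/
import Mathlib

section
/- Let S be a real symmetric n×n matrix of signature (1, n−1), C = {x ∈ ℝⁿ : xᵀSx ≥ 0, h·x ≥ 0} the positive cone with respect to a vector h satisfying hᵀSh > 0, and let C≤1 = C ∩ {x : hᵀSx ≤ 1}. Then the Lebesgue volume of C≤1 equals Vₙ / (√|det S| · (hᵀSh)^{n/2}), where Vₙ is the volume of {x ∈ ℝⁿ : 0 ≤ x₁ ≤ 1, x₁² − x₂² − ⋯ − xₙ² ≥ 0}. -/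
/-!
Choose `T` with `Tᵀ S T = η = diag(1, -1, …, -1)` and put `c = hᵀSh`. The vector
`u = T⁻¹ h / √c` satisfies `uᵀηu = 1 = e₀ᵀηe₀`, so an η-reflection (along `e₀ - u` or `e₀ + u`,
whichever is not η-isotropic, followed by `-1` in the second case) is an η-isometry `R` with
`R e₀ = u`. The map `M = T R / √c` then has `Mᵀ S M = η / c` and `M (c e₀) = h`, so it pulls the
truncated cone of `(S, h)` back to the model cone `{0 ≤ x₀ ≤ 1, x₀² ≥ ∑ xᵢ²}`, and
`|det M| = c^{-n/2} |det T| = c^{-n/2} / √|det S|`.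
-/

open MeasureTheory Matrix Finset

section BilinearForm

variable {ι R : Type*} [Fintype ι] [CommSemiring R]

theorem mulVec_dotProduct_mulVec_mulVec (M S : Matrix ι ι R) (x y : ι → R) :
    (M *ᵥ x) ⬝ᵥ S *ᵥ (M *ᵥ y) = x ⬝ᵥ (Mᵀ * S * M) *ᵥ y := by
  rw [← mulVec_mulVec, ← mulVec_mulVec, dotProduct_mulVec x, vecMul_transpose]

theorem Matrix.IsSymm.dotProduct_mulVec_comm {η : Matrix ι ι R} (hη : η.IsSymm) (x y : ι → R) :
    x ⬝ᵥ η *ᵥ y = y ⬝ᵥ η *ᵥ x := by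
  rw [dotProduct_mulVec, ← mulVec_transpose, hη.eq, dotProduct_comm]

end BilinearForm

section Isometry

variable {ι K : Type*} [Fintype ι] [DecidableEq ι] [Field K]

def formReflection (η : Matrix ι ι K) (v : ι → K) : Matrix ι ι K :=
  1 - (2 / (v ⬝ᵥ η *ᵥ v)) • vecMulVec v (v ᵥ* η)

theorem formReflection_mulVec (η : Matrix ι ι K) (v x : ι → K) :
    formReflection η v *ᵥ x = x - (2 * (v ⬝ᵥ η *ᵥ x) / (v ⬝ᵥ η *ᵥ v)) • v := by
  rw [formReflection, sub_mulVec, one_mulVec, smul_mulVec, vecMulVec_mulVec, ← dotProduct_mulVec,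
    op_smul_eq_smul, smul_smul, div_mul_eq_mul_div]

theorem transpose_mul_mul_formReflection {η : Matrix ι ι K} (hη : η.IsSymm) {v : ι → K}
    (hv : v ⬝ᵥ η *ᵥ v ≠ 0) : (formReflection η v)ᵀ * η * formReflection η v = η := by
  refine Matrix.toBilin'.injective (LinearMap.ext₂ fun x y => ?_)
  simp only [toBilin'_apply', ← mulVec_dotProduct_mulVec_mulVec, formReflection_mulVec,
    mulVec_sub, mulVec_smul, sub_dotProduct, dotProduct_sub, smul_dotProduct, dotProduct_smul,
    smul_eq_mul, hη.dotProduct_mulVec_comm x v]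
  field_simp
  ring

theorem formReflection_sub_mulVec {η : Matrix ι ι K} (hη : η.IsSymm) {a b : ι → K}
    (hab : a ⬝ᵥ η *ᵥ a = b ⬝ᵥ η *ᵥ b) (h : (a - b) ⬝ᵥ η *ᵥ (a - b) ≠ 0) :
    formReflection η (a - b) *ᵥ a = b := by
  have key : (a - b) ⬝ᵥ η *ᵥ (a - b) = 2 * ((a - b) ⬝ᵥ η *ᵥ a) := by
    simp only [mulVec_sub, sub_dotProduct, dotProduct_sub, hη.dotProduct_mulVec_comm a b]
    rw [hab]
    ring
  rw [formReflection_mulVec, ← key, div_self h, one_smul, sub_sub_cancel]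

theorem exists_transpose_mul_mul_eq_mulVec_eq [NeZero (2 : K)] {η : Matrix ι ι K}
    (hη : η.IsSymm) {a b : ι → K} (hab : a ⬝ᵥ η *ᵥ a = b ⬝ᵥ η *ᵥ b) (ha : a ⬝ᵥ η *ᵥ a ≠ 0) :
    ∃ R : Matrix ι ι K, Rᵀ * η * R = η ∧ R *ᵥ a = b := by
  by_cases hsub : (a - b) ⬝ᵥ η *ᵥ (a - b) = 0
  · have hadd : (a - -b) ⬝ᵥ η *ᵥ (a - -b) ≠ 0 := by
      have parallelogram : (a - -b) ⬝ᵥ η *ᵥ (a - -b) + (a - b) ⬝ᵥ η *ᵥ (a - b)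
          = 4 * (a ⬝ᵥ η *ᵥ a) := by
        simp only [mulVec_sub, mulVec_neg, sub_dotProduct, dotProduct_sub, neg_dotProduct,
          dotProduct_neg, hab]
        ring
      have h4 : (4 : K) ≠ 0 := by
        rw [show (4 : K) = 2 * 2 by norm_num]
        exact mul_ne_zero two_ne_zero two_ne_zero
      rw [← sub_eq_iff_eq_add.mpr parallelogram.symm, hsub, sub_zero]
      exact mul_ne_zero h4 ha
    refine ⟨-formReflection η (a - -b), ?_, ?_⟩
    · rw [transpose_neg, neg_mul, mul_neg, neg_mul, neg_neg,
        transpose_mul_mul_formReflection hη hadd]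
    · rw [neg_mulVec, formReflection_sub_mulVec hη (by rw [mulVec_neg, neg_dotProduct,
        dotProduct_neg, neg_neg, hab]) hadd, neg_neg]
  · exact ⟨_, transpose_mul_mul_formReflection hη hsub, formReflection_sub_mulVec hη hab hsub⟩

end Isometry

section Determinant

variable {ι : Type*} [Fintype ι] [DecidableEq ι]

theorem sqrt_abs_det_mul_abs_det {S T η : Matrix ι ι ℝ} (hT : Tᵀ * S * T = η)
    (hη : |η.det| = 1) : √|S.det| * |T.det| = 1 := by
  rw [← hT, det_mul, det_mul, det_transpose, abs_mul, abs_mul, mul_comm |T.det|, mul_assoc,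
    ← sq] at hη
  rw [← Real.sqrt_sq (abs_nonneg T.det), ← Real.sqrt_mul (abs_nonneg _), hη, Real.sqrt_one]

theorem volume_eq_ofReal_abs_det_mul_volume_preimage_mulVec {M : Matrix ι ι ℝ} (hM : M.det ≠ 0)
    (s : Set (ι → ℝ)) :
    volume s = ENNReal.ofReal |M.det| * volume ((M *ᵥ ·) ⁻¹' s) := by
  have hsurj : Function.Surjective (M *ᵥ ·) :=
    mulVec_surjective_iff_isUnit.mpr ((isUnit_iff_isUnit_det M).mpr hM.isUnit)
  rw [← LinearMap.det_toLin', ← Measure.addHaar_image_linearMap]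
  exact congrArg volume (Set.image_preimage_eq s hsurj).symm

end Determinant

section Cone

variable {ι : Type*} [Fintype ι]

def truncatedPositiveCone (S : Matrix ι ι ℝ) (h : ι → ℝ) : Set (ι → ℝ) :=
  {x | 0 ≤ x ⬝ᵥ S *ᵥ x ∧ 0 ≤ h ⬝ᵥ S *ᵥ x ∧ h ⬝ᵥ S *ᵥ x ≤ 1}

theorem preimage_truncatedPositiveCone {M S S' : Matrix ι ι ℝ} (hM : Mᵀ * S * M = S')
    (h : ι → ℝ) :
    (M *ᵥ ·) ⁻¹' truncatedPositiveCone S (M *ᵥ h) = truncatedPositiveCone S' h := by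
  ext x
  simp only [truncatedPositiveCone, Set.mem_preimage, Set.mem_ofPred_eq,
    mulVec_dotProduct_mulVec_mulVec, hM]

theorem truncatedPositiveCone_smul {c : ℝ} (hc : 0 < c) (S : Matrix ι ι ℝ) (h : ι → ℝ) :
    truncatedPositiveCone (c • S) (c⁻¹ • h) = truncatedPositiveCone S h := by
  ext x
  simp only [truncatedPositiveCone, Set.mem_ofPred_eq, smul_mulVec, dotProduct_smul,
    smul_dotProduct, smul_eq_mul, mul_inv_cancel_left₀ hc.ne', mul_nonneg_iff_of_pos_left hc]

theorem preimage_smul_truncatedPositiveCone {N S S' : Matrix ι ι ℝ} (hN : Nᵀ * S * N = S')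
    {t : ℝ} (ht : 0 < t) (h : ι → ℝ) :
    ((t⁻¹ • N) *ᵥ ·) ⁻¹' truncatedPositiveCone S (N *ᵥ (t • h)) =
      truncatedPositiveCone S' h := by
  have hM : (t⁻¹ • N)ᵀ * S * (t⁻¹ • N) = (t ^ 2)⁻¹ • S' := by
    rw [transpose_smul, smul_mul, Matrix.mul_smul, smul_mul, smul_smul, hN, ← mul_inv, sq]
  have hh : N *ᵥ (t • h) = (t⁻¹ • N) *ᵥ ((t ^ 2)⁻¹⁻¹ • h) := by
    rw [inv_inv, smul_mulVec, mulVec_smul, mulVec_smul, smul_smul, sq, inv_mul_cancel_left₀ ht.ne']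
  rw [hh, preimage_truncatedPositiveCone hM, truncatedPositiveCone_smul (by positivity)]

end Cone

section Minkowski

variable {ι : Type*} [Fintype ι] [DecidableEq ι]

def minkowski (i₀ : ι) : Matrix ι ι ℝ :=
  diagonal fun i => if i = i₀ then 1 else -1

omit [Fintype ι] in
theorem isSymm_minkowski (i₀ : ι) : (minkowski i₀).IsSymm := isSymm_diagonal _

theorem abs_det_minkowski (i₀ : ι) : |(minkowski i₀).det| = 1 := by
  rw [minkowski, det_diagonal, Finset.abs_prod]
  exact Finset.prod_eq_one fun i _ => by split_ifs <;> simp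

theorem dotProduct_minkowski_mulVec (i₀ : ι) (x y : ι → ℝ) :
    x ⬝ᵥ minkowski i₀ *ᵥ y = x i₀ * y i₀ - ∑ i ∈ univ \ {i₀}, x i * y i := by
  simp only [minkowski, dotProduct, mulVec_diagonal]
  rw [← Finset.sum_sdiff (Finset.subset_univ {i₀}), Finset.sum_singleton, if_pos rfl,
    one_mul, sub_eq_neg_add, ← Finset.sum_neg_distrib]
  congr 1
  refine Finset.sum_congr rfl fun i hi => ?_
  rw [if_neg (by simpa using hi)]
  ring

theorem single_dotProduct_minkowski_mulVec (i₀ : ι) (x : ι → ℝ) :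
    Pi.single i₀ 1 ⬝ᵥ minkowski i₀ *ᵥ x = x i₀ := by
  rw [single_dotProduct, one_mul, minkowski, mulVec_diagonal, if_pos rfl, one_mul]

theorem truncatedPositiveCone_minkowski_single (i₀ : ι) :
    truncatedPositiveCone (minkowski i₀) (Pi.single i₀ 1) =
      {x | 0 ≤ x i₀ ∧ x i₀ ≤ 1 ∧ 0 ≤ x i₀ ^ 2 - ∑ i ∈ univ \ {i₀}, x i ^ 2} := by
  ext x
  simp only [truncatedPositiveCone, Set.mem_ofPred_eq, single_dotProduct_minkowski_mulVec]
  rw [dotProduct_minkowski_mulVec]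
  simp only [← sq]
  exact and_rotate

theorem isBounded_truncatedPositiveCone_minkowski_single (i₀ : ι) :
    Bornology.IsBounded (truncatedPositiveCone (minkowski i₀) (Pi.single i₀ 1)) := by
  refine (Metric.isBounded_Icc (-1 : ι → ℝ) 1).subset fun x hx => ?_
  rw [truncatedPositiveCone_minkowski_single] at hx
  obtain ⟨h0, h1, hq⟩ := hx
  have hsq : ∀ i, x i ^ 2 ≤ 1 := fun i => by
    rcases eq_or_ne i i₀ with rfl | hi
    · nlinarith
    · have := Finset.single_le_sum (fun k _ => sq_nonneg (x k)) (by simpa using hi :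
        i ∈ univ \ {i₀})
      nlinarith
  have habs i : |x i| ≤ 1 := sq_le_one_iff_abs_le_one (x i) |>.mp (hsq i)
  exact ⟨fun i => (abs_le.mp (habs i)).1, fun i => (abs_le.mp (habs i)).2⟩

theorem exists_minkowski_frame {S T : Matrix ι ι ℝ} {i₀ : ι} (hT : Tᵀ * S * T = minkowski i₀)
    {h : ι → ℝ} (hpos : 0 < h ⬝ᵥ S *ᵥ h) :
    ∃ N : Matrix ι ι ℝ, Nᵀ * S * N = minkowski i₀ ∧
      N *ᵥ (√(h ⬝ᵥ S *ᵥ h) • Pi.single i₀ 1) = h := by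
  set c := h ⬝ᵥ S *ᵥ h
  have hST := sqrt_abs_det_mul_abs_det hT (abs_det_minkowski i₀)
  have hTdet : IsUnit T.det :=
    isUnit_iff_ne_zero.mpr (abs_ne_zero.mp (right_ne_zero_of_mul_eq_one hST))
  have hc : √c ≠ 0 := (Real.sqrt_pos.mpr hpos).ne'
  set u := (√c)⁻¹ • (T⁻¹ *ᵥ h)
  have hTu : T *ᵥ u = (√c)⁻¹ • h := by
    rw [mulVec_smul, mulVec_mulVec, mul_nonsing_inv _ hTdet, one_mulVec]
  have he₀ : Pi.single i₀ 1 ⬝ᵥ minkowski i₀ *ᵥ Pi.single i₀ 1 = 1 := by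
    rw [single_dotProduct_minkowski_mulVec, Pi.single_eq_same]
  have hu : u ⬝ᵥ minkowski i₀ *ᵥ u = 1 := by
    rw [← hT, ← mulVec_dotProduct_mulVec_mulVec, hTu, mulVec_smul, smul_dotProduct,
      dotProduct_smul, smul_eq_mul, smul_eq_mul, ← mul_assoc, ← mul_inv,
      Real.mul_self_sqrt hpos.le, inv_mul_cancel₀ hpos.ne']
  obtain ⟨R, hR, hRe₀⟩ := exists_transpose_mul_mul_eq_mulVec_eq (isSymm_minkowski i₀)
    (he₀.trans hu.symm) (he₀.symm ▸ one_ne_zero)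
  refine ⟨T * R, ?_, ?_⟩
  · rw [transpose_mul, show Rᵀ * Tᵀ * S * (T * R) = Rᵀ * (Tᵀ * S * T) * R by
      simp only [Matrix.mul_assoc], hT, hR]
  · rw [mulVec_smul, ← mulVec_mulVec, hRe₀, hTu, smul_smul, mul_inv_cancel₀ hc, one_smul]

end Minkowski

theorem volume_positive_cone_general (n : ℕ) (hn : 0 < n)
    (S : Matrix (Fin n) (Fin n) ℝ)
    -- S has Lorentzian signature (1, n-1): it is diagonalizable to diag(1,-1,…,-1)
    (T : Matrix (Fin n) (Fin n) ℝ)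
    (hdiag : Tᵀ * S * T =
      Matrix.diagonal (fun i => if i = (⟨0, hn⟩ : Fin n) then (1 : ℝ) else -1))
    (h : Fin n → ℝ) (hpos : 0 < dotProduct h (S.mulVec h)) :
    volume {x : Fin n → ℝ |
        0 ≤ dotProduct x (S.mulVec x) ∧
        0 ≤ dotProduct h (S.mulVec x) ∧
        dotProduct h (S.mulVec x) ≤ 1}
      = ENNReal.ofReal
          ((volume {x : Fin n → ℝ |
              0 ≤ x ⟨0, hn⟩ ∧ x ⟨0, hn⟩ ≤ 1 ∧
              0 ≤ (x ⟨0, hn⟩)^2 - ∑ i ∈ Finset.univ \ {(⟨0, hn⟩ : Fin n)}, (x i)^2}).toReal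
            / (Real.sqrt |S.det| * (dotProduct h (S.mulVec h)) ^ ((n : ℝ) / 2))) := by
  set i₀ : Fin n := ⟨0, hn⟩
  set c := h ⬝ᵥ S *ᵥ h
  obtain ⟨N, hN, hNh⟩ := exists_minkowski_frame (i₀ := i₀) hdiag hpos
  have hNdet := sqrt_abs_det_mul_abs_det hN (abs_det_minkowski i₀)
  set M := (√c)⁻¹ • N
  have hcone : (M *ᵥ ·) ⁻¹' truncatedPositiveCone S h =
      truncatedPositiveCone (minkowski i₀) (Pi.single i₀ 1) :=
    hNh ▸ preimage_smul_truncatedPositiveCone hN (Real.sqrt_pos.mpr hpos) _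
  have hMdet : |M.det| = (√|S.det| * c ^ ((n : ℝ) / 2))⁻¹ := by
    rw [det_smul, abs_mul, abs_pow, abs_inv, abs_of_nonneg (Real.sqrt_nonneg c),
      eq_inv_of_mul_eq_one_right hNdet, Fintype.card_fin, Real.rpow_div_two_eq_sqrt _ hpos.le,
      Real.rpow_natCast, mul_inv, inv_pow, mul_comm]
  have hMdet_ne : M.det ≠ 0 := by
    rw [← abs_ne_zero, hMdet]
    exact inv_ne_zero (mul_ne_zero (left_ne_zero_of_mul_eq_one hNdet)
      (Real.rpow_pos_of_pos hpos _).ne')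
  have hfin := (isBounded_truncatedPositiveCone_minkowski_single i₀).measure_lt_top (μ := volume)
  rw [← truncatedPositiveCone_minkowski_single]
  change volume (truncatedPositiveCone S h) = _
  rw [volume_eq_ofReal_abs_det_mul_volume_preimage_mulVec hMdet_ne, hcone, hMdet,
    ← ENNReal.ofReal_toReal hfin.ne, ← ENNReal.ofReal_mul (by positivity),
    ENNReal.toReal_ofReal ENNReal.toReal_nonneg, inv_mul_eq_div]

theorem volume_positive_cone (n : ℕ) (hn : 0 < n)
    (S : Matrix (Fin n) (Fin n) ℝ) (hS : S.IsSymm)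
    -- S has Lorentzian signature (1, n-1): it is diagonalizable to diag(1,-1,…,-1)
    (T : Matrix (Fin n) (Fin n) ℝ) (hT : IsUnit T.det)
    (hdiag : Tᵀ * S * T =
      Matrix.diagonal (fun i => if i = (⟨0, hn⟩ : Fin n) then (1 : ℝ) else -1))
    (h : Fin n → ℝ) (hpos : 0 < dotProduct h (S.mulVec h)) :
    volume {x : Fin n → ℝ |
        0 ≤ dotProduct x (S.mulVec x) ∧
        0 ≤ dotProduct h (S.mulVec x) ∧
        dotProduct h (S.mulVec x) ≤ 1}
      = ENNReal.ofReal
          ((volume {x : Fin n → ℝ |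
              0 ≤ x ⟨0, hn⟩ ∧ x ⟨0, hn⟩ ≤ 1 ∧
              0 ≤ (x ⟨0, hn⟩)^2 - ∑ i ∈ Finset.univ \ {(⟨0, hn⟩ : Fin n)}, (x i)^2}).toReal
            / (Real.sqrt |S.det| * (dotProduct h (S.mulVec h)) ^ ((n : ℝ) / 2))) :=
  volume_positive_cone_general n hn S T hdiag h hpos
end

section
/- Let d < 0 be a square-free integer, ω = √d if d ≡ 2,3 mod 4 and ω = (1+√d)/2 if d ≡ 1 mod 4. Let t ∈ ℕ, τ ∈ ℂ∖ℝ, Λ₁ = ℤ + ℤtτ ⊆ Λ₂ = ℤ + ℤτ. Suppose the multiplier rings are O₁ = {μ : μΛ₁ ⊆ Λ₁} = ℤ + ℤf₁ω and O₂ = {μ : μΛ₂ ⊆ Λ₂} = ℤ + ℤf₂ω. Then every λ ∈ ℂ with λΛ₁ ⊆ Λ₂ lies in (1/t)·(ℤ + ℤ·lcm(f₁,f₂)·ω̄). -/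
/-!
If `λ Λ₁ ⊆ Λ₂` then, since `t Λ₂ ⊆ Λ₁`, the number `tλ` multiplies both `Λ₁` and `Λ₂` into
themselves, so it lies in `O₁ ∩ O₂`. Comparing imaginary parts of `a + b f₁ ω = a' + b' f₂ ω`
gives `b f₁ = b' f₂`, a common multiple of `f₁` and `f₂`, hence `tλ ∈ ℤ + ℤ lcm(f₁, f₂) ω`.
Finally `ω̄ = s - ω` with `s ∈ {0, 1}`, so `ℤ + ℤ n ω = ℤ + ℤ n ω̄` for every integer `n`.
-/

open ComplexConjugate

namespace ImagQuadratic

def intSpanOne (w : ℂ) : Set ℂ := {z : ℂ | ∃ m n : ℤ, z = (m : ℂ) + (n : ℂ) * w}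

def multiplierRing (Λ : Set ℂ) : Set ℂ := {μ : ℂ | ∀ z ∈ Λ, μ * z ∈ Λ}

/-- The generator `ω` of the maximal order of `ℚ(√d)`, for `d < 0`. -/
noncomputable def omega (d : ℤ) : ℂ :=
  if d % 4 = 1 then (1 + Complex.I * Real.sqrt (-(d : ℝ))) / 2
  else Complex.I * Real.sqrt (-(d : ℝ))

theorem omega_im_ne_zero {d : ℤ} (hd : d < 0) : (omega d).im ≠ 0 := by
  have hsqrt : 0 < Real.sqrt (-(d : ℝ)) :=
    Real.sqrt_pos.mpr (neg_pos.mpr (Int.cast_lt_zero.mpr hd))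
  unfold omega
  split_ifs <;> simp [hsqrt.ne']

theorem exists_conj_omega_eq_sub (d : ℤ) : ∃ s : ℤ, conj (omega d) = s - omega d := by
  unfold omega
  split_ifs
  · exact ⟨1, by simp [map_div₀, Complex.conj_ofReal, map_ofNat]; ring⟩
  · exact ⟨0, by simp [Complex.conj_ofReal]⟩

theorem mul_mem_multiplierRing_of_mul_mem {A B : Set ℂ} {l c : ℂ}
    (hl : ∀ z ∈ A, l * z ∈ B) (hc : ∀ z ∈ B, c * z ∈ A) :
    c * l ∈ multiplierRing A ∧ c * l ∈ multiplierRing B := by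
  refine ⟨fun z hz => ?_, fun z hz => ?_⟩
  · simpa only [mul_assoc] using hc _ (hl z hz)
  · simpa only [mul_comm c l, mul_assoc] using hl _ (hc z hz)

theorem natCast_mul_mem_intSpanOne_natCast_mul {τ z : ℂ} (t : ℕ) (hz : z ∈ intSpanOne τ) :
    (t : ℂ) * z ∈ intSpanOne ((t : ℂ) * τ) := by
  obtain ⟨m, n, rfl⟩ := hz
  exact ⟨t * m, n, by push_cast; ring⟩

theorem mem_intSpanOne_lcm_mul_of_mem_inter {ω z : ℂ} (hω : ω.im ≠ 0) {f₁ f₂ : ℕ}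
    (h₁ : z ∈ intSpanOne ((f₁ : ℂ) * ω)) (h₂ : z ∈ intSpanOne ((f₂ : ℂ) * ω)) :
    z ∈ intSpanOne ((Nat.lcm f₁ f₂ : ℂ) * ω) := by
  obtain ⟨a, b, rfl⟩ := h₁
  obtain ⟨a', b', heq⟩ := h₂
  have him : ((b * f₁ : ℤ) : ℝ) * ω.im = ((b' * f₂ : ℤ) : ℝ) * ω.im := by
    simpa [Complex.mul_im, mul_assoc] using congrArg Complex.im heq
  have hcommon : b * f₁ = b' * f₂ := by exact_mod_cast mul_right_cancel₀ hω him
  obtain ⟨k, hk⟩ : (Nat.lcm f₁ f₂ : ℤ) ∣ b * f₁ := by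
    simpa [Int.lcm] using Int.coe_lcm_dvd (dvd_mul_left (f₁ : ℤ) b)
      (hcommon ▸ dvd_mul_left (f₂ : ℤ) b' : (f₂ : ℤ) ∣ b * f₁)
  refine ⟨a, k, ?_⟩
  have hk' : (b : ℂ) * f₁ = (Nat.lcm f₁ f₂ : ℂ) * k := by exact_mod_cast hk
  linear_combination ω * hk'

theorem mem_intSpanOne_natCast_mul_conj {ω z : ℂ} {s : ℤ} (hs : conj ω = s - ω) {c : ℕ}
    (h : z ∈ intSpanOne ((c : ℂ) * ω)) : z ∈ intSpanOne ((c : ℂ) * conj ω) := by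
  obtain ⟨a, k, rfl⟩ := h
  exact ⟨a + k * c * s, -k, by rw [hs]; push_cast; ring⟩

end ImagQuadratic

open ImagQuadratic in
theorem hom_in_scaled_order_general (d : ℤ) (hd : d < 0)
    (ω : ℂ)
    (hω : ω = if d % 4 = 1 then (1 + Complex.I * Real.sqrt (-(d : ℝ))) / 2
              else Complex.I * Real.sqrt (-(d : ℝ)))
    (t : ℕ) (ht : 0 < t) (τ : ℂ)
    (f₁ f₂ : ℕ)
    (Λ₁ Λ₂ : Set ℂ)
    (hΛ₁ : Λ₁ = {z : ℂ | ∃ m n : ℤ, z = (m : ℂ) + (n : ℂ) * ((t : ℂ) * τ)})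
    (hΛ₂ : Λ₂ = {z : ℂ | ∃ m n : ℤ, z = (m : ℂ) + (n : ℂ) * τ})
    (hO₁ : {μ : ℂ | ∀ z ∈ Λ₁, μ * z ∈ Λ₁}
      = {z : ℂ | ∃ m n : ℤ, z = (m : ℂ) + (n : ℂ) * ((f₁ : ℂ) * ω)})
    (hO₂ : {μ : ℂ | ∀ z ∈ Λ₂, μ * z ∈ Λ₂}
      = {z : ℂ | ∃ m n : ℤ, z = (m : ℂ) + (n : ℂ) * ((f₂ : ℂ) * ω)}) :
    ∀ l : ℂ, (∀ z ∈ Λ₁, l * z ∈ Λ₂) →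
      ∃ m n : ℤ, l = ((m : ℂ) + (n : ℂ) * ((Nat.lcm f₁ f₂ : ℂ) * (starRingEnd ℂ) ω)) / t := by
  intro l hl
  change ω = omega d at hω
  change Λ₁ = intSpanOne ((t : ℂ) * τ) at hΛ₁
  change Λ₂ = intSpanOne τ at hΛ₂
  have hscale : ∀ z ∈ Λ₂, (t : ℂ) * z ∈ Λ₁ := fun z hz => by
    rw [hΛ₂] at hz
    exact hΛ₁ ▸ natCast_mul_mem_intSpanOne_natCast_mul t hz
  obtain ⟨hO₁l, hO₂l⟩ := mul_mem_multiplierRing_of_mul_mem hl hscale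
  change multiplierRing Λ₁ = intSpanOne ((f₁ : ℂ) * ω) at hO₁
  change multiplierRing Λ₂ = intSpanOne ((f₂ : ℂ) * ω) at hO₂
  rw [hO₁] at hO₁l
  rw [hO₂] at hO₂l
  have hlcm := mem_intSpanOne_lcm_mul_of_mem_inter (hω ▸ omega_im_ne_zero hd) hO₁l hO₂l
  obtain ⟨s, hs⟩ := exists_conj_omega_eq_sub d
  obtain ⟨m, n, hmn⟩ := mem_intSpanOne_natCast_mul_conj (hω ▸ hs) hlcm
  refine ⟨m, n, ?_⟩
  rw [eq_div_iff (Nat.cast_ne_zero.mpr ht.ne'), ← hmn, mul_comm]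

theorem hom_in_scaled_order (d : ℤ) (hd : d < 0) (hsf : Squarefree d)
    (ω : ℂ)
    (hω : ω = if d % 4 = 1 then (1 + Complex.I * Real.sqrt (-(d : ℝ))) / 2
              else Complex.I * Real.sqrt (-(d : ℝ)))
    (t : ℕ) (ht : 0 < t) (τ : ℂ) (hτ : τ.im ≠ 0)
    (f₁ f₂ : ℕ) (hf₁ : 0 < f₁) (hf₂ : 0 < f₂)
    (Λ₁ Λ₂ : Set ℂ)
    (hΛ₁ : Λ₁ = {z : ℂ | ∃ m n : ℤ, z = (m : ℂ) + (n : ℂ) * ((t : ℂ) * τ)})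
    (hΛ₂ : Λ₂ = {z : ℂ | ∃ m n : ℤ, z = (m : ℂ) + (n : ℂ) * τ})
    (hO₁ : {μ : ℂ | ∀ z ∈ Λ₁, μ * z ∈ Λ₁}
      = {z : ℂ | ∃ m n : ℤ, z = (m : ℂ) + (n : ℂ) * ((f₁ : ℂ) * ω)})
    (hO₂ : {μ : ℂ | ∀ z ∈ Λ₂, μ * z ∈ Λ₂}
      = {z : ℂ | ∃ m n : ℤ, z = (m : ℂ) + (n : ℂ) * ((f₂ : ℂ) * ω)}) :
    ∀ l : ℂ, (∀ z ∈ Λ₁, l * z ∈ Λ₂) →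
      ∃ m n : ℤ, l = ((m : ℂ) + (n : ℂ) * ((Nat.lcm f₁ f₂ : ℂ) * (starRingEnd ℂ) ω)) / t :=
  hom_in_scaled_order_general d hd ω hω t ht τ f₁ f₂ Λ₁ Λ₂ hΛ₁ hΛ₂ hO₁ hO₂
end

section
/- Let d < 0 square-free, ω as above, f₁, f₂ positive integers, t ∈ ℕ, τ ∈ ℂ∖ℝ, with Λ₁ = ℤ + ℤtτ ⊆ Λ₂ = ℤ + ℤτ and multiplier rings ℤ + ℤfᵢω. If Hom(Λ₁,Λ₂) = ℤ + ℤσ, then |Im(σ)| = lcm(f₁,f₂)·|Im(ω)| / t. -/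
/-!
Every lattice `Λ` here contains `1`, so `Hom(Λ₁, Λ₂) ⊆ Λ₂ = ℤ + ℤτ` and each of `O₁`, `O₂`,
`Hom(Λ₁, Λ₂)` is determined by which multiples `nτ` it contains. With `σ = p + qτ`,
`f₁ω = a₁ + b₁tτ` and `f₂ω = a₂ + b₂τ` these are the ideals `qℤ`, `b₁tℤ` and `b₂ℤ`.
Now `kτ ∈ Hom(Λ₁, Λ₂)` iff `ktτ ∈ O₂` (both say `ktτ² ∈ Λ₂`), and `O₁ ∩ O₂ ∩ ℤτ = Λ₁ ∩ O₂ ∩ ℤτ`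
because `tΛ₂ ⊆ Λ₁`. Hence `qtℤ = b₁tℤ ∩ b₂ℤ`, i.e. `|q|t = lcm(b₁t, b₂)`, and comparing imaginary
parts turns this into `t |Im σ| = lcm(f₁, f₂) |Im ω|`.
-/

def intSpan (x : ℂ) : Set ℂ := {z | ∃ m n : ℤ, z = (m : ℂ) + (n : ℂ) * x}

/-- `Hom(Λ, Λ')`; the multiplier ring of `Λ` is `homSet Λ Λ`. -/
def homSet (Λ Λ' : Set ℂ) : Set ℂ := {l | ∀ z ∈ Λ, l * z ∈ Λ'}

namespace intSpan

variable {x τ : ℂ}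

theorem one_mem : (1 : ℂ) ∈ intSpan x := ⟨1, 0, by simp⟩

theorem self_mem (x : ℂ) : x ∈ intSpan x := ⟨0, 1, by simp⟩

theorem add_mem {z w : ℂ} (hz : z ∈ intSpan x) (hw : w ∈ intSpan x) : z + w ∈ intSpan x := by
  obtain ⟨m, n, rfl⟩ := hz
  obtain ⟨m', n', rfl⟩ := hw
  exact ⟨m + m', n + n', by push_cast; ring⟩

theorem intCast_mul_mem {z : ℂ} (k : ℤ) (hz : z ∈ intSpan x) : (k : ℂ) * z ∈ intSpan x := by
  obtain ⟨m, n, rfl⟩ := hz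
  exact ⟨k * m, k * n, by push_cast; ring⟩

theorem intCast_mul_self_mem (k : ℤ) : (k : ℂ) * x ∈ intSpan x := intCast_mul_mem k (self_mem x)

theorem natCast_mul_mem_mul (t : ℕ) {z : ℂ} (hz : z ∈ intSpan τ) :
    (t : ℂ) * z ∈ intSpan ((t : ℂ) * τ) := by
  obtain ⟨m, n, rfl⟩ := hz
  exact ⟨t * m, n, by push_cast; ring⟩

theorem coeff_unique (hτ : τ.im ≠ 0) {m n m' n' : ℤ}
    (h : (m : ℂ) + n * τ = m' + n' * τ) : m = m' ∧ n = n' := by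
  have him := congrArg Complex.im h
  have hre := congrArg Complex.re h
  simp only [Complex.add_im, Complex.add_re, Complex.mul_im, Complex.mul_re, Complex.intCast_re,
    Complex.intCast_im, zero_mul, add_zero, zero_add, sub_zero] at him hre
  have hn : n = n' := by exact_mod_cast mul_right_cancel₀ hτ him
  subst hn
  exact ⟨by exact_mod_cast add_right_cancel hre, rfl⟩

theorem intCast_mul_mem_iff (hτ : τ.im ≠ 0) {σ : ℂ} {a b : ℤ} (hσ : σ = a + b * τ) (k : ℤ) :
    (k : ℂ) * τ ∈ intSpan σ ↔ b ∣ k := by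
  constructor
  · rintro ⟨m, n, h⟩
    have h' : ((0 : ℤ) : ℂ) + k * τ = ((m + n * a : ℤ) : ℂ) + ((n * b : ℤ) : ℂ) * τ := by
      rw [h, hσ]; push_cast; ring
    exact ⟨n, by rw [(coeff_unique hτ h').2, mul_comm]⟩
  · rintro ⟨j, rfl⟩
    exact ⟨-(j * a), j, by rw [hσ]; push_cast; ring⟩

theorem coeff_mul_eq_mul_coeff (hτ : τ.im ≠ 0) {ω : ℂ} {f₁ f₂ a₁ b₁ a₂ b₂ : ℤ}
    (h₁ : f₁ * ω = a₁ + b₁ * τ) (h₂ : f₂ * ω = a₂ + b₂ * τ) : f₁ * b₂ = b₁ * f₂ := by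
  have h : ((f₂ * a₁ : ℤ) : ℂ) + ((f₂ * b₁ : ℤ) : ℂ) * τ
      = ((f₁ * a₂ : ℤ) : ℂ) + ((f₁ * b₂ : ℤ) : ℂ) * τ := by
    push_cast
    linear_combination (f₁ : ℂ) * h₂ - (f₂ : ℂ) * h₁
  linear_combination -(coeff_unique hτ h).2

end intSpan

namespace homSet

open intSpan

variable {x y : ℂ}

theorem intSpan_subset {Λ' : Set ℂ} : homSet (intSpan x) Λ' ⊆ Λ' := fun l hl => by
  simpa using hl 1 intSpan.one_mem

theorem mem_intSpan_iff {l : ℂ} :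
    l ∈ homSet (intSpan x) (intSpan y) ↔ l ∈ intSpan y ∧ l * x ∈ intSpan y := by
  refine ⟨fun hl => ⟨intSpan_subset hl, hl x (self_mem x)⟩, fun ⟨h₁, hx⟩ z hz => ?_⟩
  obtain ⟨m, n, rfl⟩ := hz
  rw [mul_add, mul_left_comm, mul_comm l]
  exact add_mem (intCast_mul_mem m h₁) (intCast_mul_mem n hx)

end homSet

section Sublattice

open intSpan homSet

variable {τ l : ℂ} (t : ℕ)

/-- Both sides say that `ltτ ∈ ℤ + ℤτ`. -/
theorem mem_homSet_natCast_mul_iff (hl : l ∈ intSpan τ) :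
    l ∈ homSet (intSpan ((t : ℂ) * τ)) (intSpan τ) ↔
      (t : ℂ) * l ∈ homSet (intSpan τ) (intSpan τ) := by
  have htl : (t : ℂ) * l ∈ intSpan τ := by exact_mod_cast intCast_mul_mem t hl
  simp only [mem_intSpan_iff, hl, htl, true_and]
  ring_nf

theorem mem_homSet_natCast_mul_of_mem (h₁ : l ∈ intSpan ((t : ℂ) * τ))
    (h₂ : l ∈ homSet (intSpan τ) (intSpan τ)) :
    l ∈ homSet (intSpan ((t : ℂ) * τ)) (intSpan ((t : ℂ) * τ)) := by
  refine mem_intSpan_iff.2 ⟨h₁, ?_⟩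
  rw [mul_left_comm]
  exact natCast_mul_mem_mul t (mem_intSpan_iff.1 h₂).2

end Sublattice

theorem Int.natAbs_mul_eq_lcm {q t a b : ℤ} (hq : ∀ k, q ∣ k ↔ b ∣ k * t)
    (ha : ∀ n, t ∣ n → b ∣ n → a ∣ n) (hta : t ∣ a) :
    (q * t).natAbs = Int.lcm a b := by
  have hdvd : ∀ n, q * t ∣ n ↔ GCDMonoid.lcm a b ∣ n := fun n => by
    rw [_root_.lcm_dvd_iff]
    constructor
    · rintro ⟨j, rfl⟩
      have hb : b ∣ q * t * j := by
        rw [mul_right_comm]; exact (hq _).1 (dvd_mul_right q j)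
      exact ⟨ha _ ⟨q * j, by ring⟩ hb, hb⟩
    · rintro ⟨han, hbn⟩
      obtain ⟨k, rfl⟩ := hta.trans han
      exact mul_comm k t ▸ mul_dvd_mul_right ((hq k).2 (mul_comm t k ▸ hbn)) t
  rw [Int.natAbs_eq_of_dvd_dvd ((hdvd _).2 dvd_rfl) ((hdvd _).1 dvd_rfl), ← Int.coe_lcm,
    Int.natAbs_natCast]

theorem abs_im_intCast_add_intCast_mul (m n : ℤ) (τ : ℂ) :
    |((m : ℂ) + n * τ).im| = n.natAbs * |τ.im| := by
  simp [abs_mul, Nat.cast_natAbs]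

theorem Nat.lcm_mul_eq_lcm_mul_of_mul_eq {a b c d : ℕ} (h : a * d = c * b) :
    Nat.lcm a b * d = Nat.lcm c d * b := by
  rw [← Nat.lcm_mul_right, ← Nat.lcm_mul_right, h, mul_comm b d]

open intSpan homSet in
theorem im_of_second_generator_general
    (ω : ℂ)
    (t : ℕ) (ht : 0 < t) (τ : ℂ) (hτ : τ.im ≠ 0)
    (f₁ f₂ : ℕ) (hf₂ : 0 < f₂)
    (Λ₁ Λ₂ : Set ℂ)
    (hΛ₁ : Λ₁ = {z : ℂ | ∃ m n : ℤ, z = (m : ℂ) + (n : ℂ) * ((t : ℂ) * τ)})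
    (hΛ₂ : Λ₂ = {z : ℂ | ∃ m n : ℤ, z = (m : ℂ) + (n : ℂ) * τ})
    (hO₁ : {μ : ℂ | ∀ z ∈ Λ₁, μ * z ∈ Λ₁}
      = {z : ℂ | ∃ m n : ℤ, z = (m : ℂ) + (n : ℂ) * ((f₁ : ℂ) * ω)})
    (hO₂ : {μ : ℂ | ∀ z ∈ Λ₂, μ * z ∈ Λ₂}
      = {z : ℂ | ∃ m n : ℤ, z = (m : ℂ) + (n : ℂ) * ((f₂ : ℂ) * ω)})
    (σ : ℂ)
    (hHom : {l : ℂ | ∀ z ∈ Λ₁, l * z ∈ Λ₂}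
      = {z : ℂ | ∃ m n : ℤ, z = (m : ℂ) + (n : ℂ) * σ}) :
    |σ.im| = (Nat.lcm f₁ f₂ : ℝ) * |ω.im| / t := by
  subst hΛ₁ hΛ₂
  change homSet (intSpan ((t : ℂ) * τ)) (intSpan ((t : ℂ) * τ)) = intSpan _ at hO₁
  change homSet (intSpan τ) (intSpan τ) = intSpan _ at hO₂
  change homSet (intSpan ((t : ℂ) * τ)) (intSpan τ) = intSpan σ at hHom
  obtain ⟨p, q, hσ⟩ := intSpan_subset (hHom ▸ self_mem σ)
  obtain ⟨a₂, b₂, hω₂⟩ := intSpan_subset (hO₂ ▸ self_mem ((f₂ : ℂ) * ω))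
  obtain ⟨a₁, b₁, hω₁⟩ := intSpan_subset (hO₁ ▸ self_mem ((f₁ : ℂ) * ω))
  replace hω₁ : (f₁ : ℂ) * ω = a₁ + ((b₁ * t : ℤ) : ℂ) * τ := by rw [hω₁]; push_cast; ring
  have hq : ∀ k : ℤ, q ∣ k ↔ b₂ ∣ k * t := fun k => by
    rw [← intCast_mul_mem_iff hτ hσ, ← hHom, mem_homSet_natCast_mul_iff t (intCast_mul_self_mem k),
      show (t : ℂ) * (k * τ) = ((k * t : ℤ) : ℂ) * τ by push_cast; ring, hO₂,
      intCast_mul_mem_iff hτ hω₂]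
  have hb₁ : ∀ n : ℤ, (t : ℤ) ∣ n → b₂ ∣ n → b₁ * t ∣ n := fun n hn hbn => by
    rw [← intCast_mul_mem_iff hτ hω₁, ← hO₁]
    exact mem_homSet_natCast_mul_of_mem t
      ((intCast_mul_mem_iff hτ (a := 0) (b := t) (by simp) n).2 hn)
      (hO₂ ▸ (intCast_mul_mem_iff hτ hω₂ n).2 hbn)
  have hnat : Nat.lcm f₁ f₂ * b₂.natAbs = (q * t).natAbs * f₂ := by
    rw [Int.natAbs_mul_eq_lcm hq hb₁ (dvd_mul_left _ _)]
    have hcoeff : (f₁ : ℤ) * b₂ = b₁ * t * f₂ :=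
      coeff_mul_eq_mul_coeff hτ (by exact_mod_cast hω₁) (by exact_mod_cast hω₂)
    apply Nat.lcm_mul_eq_lcm_mul_of_mul_eq
    simpa [Int.natAbs_mul] using congrArg Int.natAbs hcoeff
  have hσim : |σ.im| = q.natAbs * |τ.im| := hσ ▸ abs_im_intCast_add_intCast_mul p q τ
  have hωim : f₂ * |ω.im| = b₂.natAbs * |τ.im| := by
    rw [← abs_im_intCast_add_intCast_mul a₂ b₂ τ, ← hω₂]
    simp [abs_mul]
  rw [eq_div_iff (by positivity), ← mul_left_inj' (by positivity : (f₂ : ℝ) ≠ 0), hσim]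
  calc (q.natAbs : ℝ) * |τ.im| * t * f₂ = ((q * t).natAbs * f₂ : ℕ) * |τ.im| := by
        push_cast [Int.natAbs_mul, Int.natAbs_natCast]; ring
    _ = Nat.lcm f₁ f₂ * |ω.im| * f₂ := by rw [← hnat]; push_cast; rw [mul_assoc, ← hωim]; ring

theorem im_of_second_generator (d : ℤ) (hd : d < 0) (hsf : Squarefree d)
    (ω : ℂ)
    (hω : ω = if d % 4 = 1 then (1 + Complex.I * Real.sqrt (-(d : ℝ))) / 2
              else Complex.I * Real.sqrt (-(d : ℝ)))
    (t : ℕ) (ht : 0 < t) (τ : ℂ) (hτ : τ.im ≠ 0)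
    (f₁ f₂ : ℕ) (hf₁ : 0 < f₁) (hf₂ : 0 < f₂)
    (Λ₁ Λ₂ : Set ℂ)
    (hΛ₁ : Λ₁ = {z : ℂ | ∃ m n : ℤ, z = (m : ℂ) + (n : ℂ) * ((t : ℂ) * τ)})
    (hΛ₂ : Λ₂ = {z : ℂ | ∃ m n : ℤ, z = (m : ℂ) + (n : ℂ) * τ})
    (hO₁ : {μ : ℂ | ∀ z ∈ Λ₁, μ * z ∈ Λ₁}
      = {z : ℂ | ∃ m n : ℤ, z = (m : ℂ) + (n : ℂ) * ((f₁ : ℂ) * ω)})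
    (hO₂ : {μ : ℂ | ∀ z ∈ Λ₂, μ * z ∈ Λ₂}
      = {z : ℂ | ∃ m n : ℤ, z = (m : ℂ) + (n : ℂ) * ((f₂ : ℂ) * ω)})
    (σ : ℂ)
    (hHom : {l : ℂ | ∀ z ∈ Λ₁, l * z ∈ Λ₂}
      = {z : ℂ | ∃ m n : ℤ, z = (m : ℂ) + (n : ℂ) * σ}) :
    |σ.im| = (Nat.lcm f₁ f₂ : ℝ) * |ω.im| / t :=
  im_of_second_generator_general ω t ht τ hτ f₁ f₂ hf₂ Λ₁ Λ₂ hΛ₁ hΛ₂ hO₁ hO₂ σ hHom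
end
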